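/- arXiv:1301.5702 — 4 statements merged into one kernel-verified Lean document; each statement's English description precedes it below -/
import Mathlib

section
/- Let h : ℂ → ℂ be an entire function and C₀ > 0 a constant such that |h(x+iy)| ≤ C₀·e^{π|y|/2} for all real x, y. Then there is a constant C > 0, depending only on C₀, such that for every real T ≥ 1 and every real r ≠ 0, |(r/T)·h(ir/T)/sinh(πr/T)| ≤ C·e^{−π|r|/(4T)}. -/
/-!
On the imaginary axis the growth bound gives `|h(iy)| ≤ C₀ e^{π|y|/2}`, while `|sinh(πy)|` grows
like `e^{π|y|}/2`; the quotient therefore decays like `e^{-π|y|/2}`, and the factor `y` costs at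
most a quarter of that exponent, via `x e^{3x/4} ≤ 4 sinh x` for `x ≥ 0`.
-/

open Real

namespace Real

/-- Follows from `x / 4 ≤ sinh (x / 4)` and
`2 sinh (x / 4) e^{3x/4} = e^x - e^{x/2} ≤ e^x - e^{-x}`. -/
lemma mul_exp_three_mul_div_four_le_four_mul_sinh {x : ℝ} (hx : 0 ≤ x) :
    x * exp (3 * x / 4) ≤ 4 * sinh x := by
  have hsinh : x / 4 ≤ sinh (x / 4) := self_le_sinh_iff.mpr (by positivity)
  have hprod : 2 * sinh (x / 4) * exp (3 * x / 4) = exp x - exp (x / 2) := by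
    rw [sinh_eq, show exp x = exp (x / 4) * exp (3 * x / 4) by rw [← exp_add]; ring_nf,
      show exp (x / 2) = exp (-(x / 4)) * exp (3 * x / 4) by rw [← exp_add]; ring_nf]
    ring
  have hexp : exp (-x) ≤ exp (x / 2) := exp_le_exp.mpr (by linarith)
  calc x * exp (3 * x / 4) ≤ 4 * sinh (x / 4) * exp (3 * x / 4) := by gcongr; linarith
    _ = 2 * (exp x - exp (x / 2)) := by rw [← hprod]; ring
    _ ≤ 4 * sinh x := by rw [sinh_eq]; linarith

end Real

lemma norm_sinh_pi_mul_ofReal (y : ℝ) : ‖Complex.sinh (π * y)‖ = sinh (π * |y|) := by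
  rw [← Complex.ofReal_mul, ← Complex.ofReal_sinh, Complex.norm_real, norm_eq_abs, abs_sinh,
    abs_mul, abs_of_pos pi_pos]

lemma norm_mul_apply_I_mul_div_sinh_le {h : ℂ → ℂ} {C₀ : ℝ}
    (hbound : ∀ y : ℝ, ‖h (y * Complex.I)‖ ≤ C₀ * exp (π * |y| / 2)) (y : ℝ) :
    ‖(y : ℂ) * h (Complex.I * y) / Complex.sinh (π * y)‖ ≤ 4 * C₀ / π * exp (-π * |y| / 4) := by
  have hC₀ : 0 ≤ C₀ := by simpa using (norm_nonneg _).trans (hbound 0)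
  rcases eq_or_ne y 0 with rfl | hy
  · simp only [Complex.ofReal_zero, zero_mul, zero_div, norm_zero]
    positivity
  set x := π * |y| with hx_def
  have hx : 0 < x := by positivity
  have hsinh : 0 < sinh x := sinh_pos_iff.mpr hx
  have habs : |y| = x / π := by rw [hx_def]; field_simp
  have hh : ‖h (Complex.I * y)‖ ≤ C₀ * exp (x / 2) := mul_comm Complex.I y ▸ hbound y
  rw [norm_div, norm_mul, norm_sinh_pi_mul_ofReal, Complex.norm_real, norm_eq_abs, ← hx_def,
    div_le_iff₀ hsinh, show -π * |y| / 4 = -x / 4 by rw [hx_def]; ring, habs]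
  have hsplit : exp (x / 2) = exp (3 * x / 4) * exp (-x / 4) := by rw [← exp_add]; ring_nf
  calc x / π * ‖h (Complex.I * y)‖ ≤ x / π * (C₀ * exp (x / 2)) := by gcongr
    _ = C₀ / π * exp (-x / 4) * (x * exp (3 * x / 4)) := by rw [hsplit]; ring
    _ ≤ C₀ / π * exp (-x / 4) * (4 * sinh x) :=
        mul_le_mul_of_nonneg_left (mul_exp_three_mul_div_four_le_four_mul_sinh hx.le)
          (by positivity)
    _ = 4 * C₀ / π * exp (-x / 4) * sinh x := by ring

theorem statement7 (C₀ : ℝ) (hC₀ : 0 < C₀) :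
    ∃ C : ℝ, 0 < C ∧ ∀ h : ℂ → ℂ, Differentiable ℂ h →
      (∀ x y : ℝ, ‖h (x + y * Complex.I)‖ ≤ C₀ * Real.exp (Real.pi * |y| / 2)) →
      ∀ T : ℝ, 1 ≤ T → ∀ r : ℝ, r ≠ 0 →
      ‖((r : ℂ) / T) * h (Complex.I * r / T) / Complex.sinh (Real.pi * r / T)‖ ≤
        C * Real.exp (-Real.pi * |r| / (4 * T)) := by
  refine ⟨4 * C₀ / π, by positivity, fun h _ hbound T hT r _ => ?_⟩
  have hT : 0 < T := one_pos.trans_le hT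
  have key := norm_mul_apply_I_mul_div_sinh_le (fun y => by simpa using hbound 0 y) (r / T)
  rw [abs_div, abs_of_pos hT] at key
  push_cast at key
  rwa [mul_div_assoc Complex.I, mul_div_assoc (π : ℂ),
    show -π * |r| / (4 * T) = -π * (|r| / T) / 4 by ring]
end

section
/- Let h : ℂ → ℂ be an entire function and C₀ > 0 a constant such that |h(x+iy)| ≤ C₀·e^{π|y|/2} for all real x, y. There exists a constant C > 0, depending only on C₀, such that for every real T > 1 and every real X with X ≥ T/8, one has ∫_0^∞ (r/T)·|h(ir/T)| / ((4r² + X²)^{1/4} · sinh(πr/T)) dr ≤ C·T^{1/2}. -/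
/-!
On the imaginary axis the growth bound gives `|h(ir/T)| ≤ C₀ e^{u/2}` with `u = πr/T`, while
`sinh u ≥ (u/4) e^{3u/4}`; so the integrand is at most `(4C₀/(π√X)) e^{-u/4}`, whose integral
is `16 C₀ T/(π² √X)`, and `X ≥ T/8` turns this into `O(√T)`.
-/

open MeasureTheory Real Set

lemma exp_div_two_le_cosh (x : ℝ) : exp x / 2 ≤ cosh x := by
  rw [cosh_eq]
  linarith [(exp_pos (-x)).le]

lemma mul_exp_le_sinh_two_mul {w : ℝ} (hw : 0 ≤ w) : w * exp w ≤ sinh (2 * w) := by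
  have hsinh : w ≤ sinh w := self_le_sinh_iff.2 hw
  have hcosh := exp_div_two_le_cosh w
  rw [sinh_two_mul]
  nlinarith [mul_le_mul_of_nonneg_left hcosh hw, mul_le_mul_of_nonneg_right hsinh (cosh_pos w).le]

lemma mul_exp_three_mul_le_sinh_four_mul {w : ℝ} (hw : 0 ≤ w) :
    w * exp (3 * w) ≤ sinh (4 * w) := by
  have hsinh := mul_exp_le_sinh_two_mul hw
  calc w * exp (3 * w) = 2 * (w * exp w) * (exp (2 * w) / 2) := by
        rw [show 3 * w = w + 2 * w by ring, exp_add]; ring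
    _ ≤ 2 * sinh (2 * w) * cosh (2 * w) := by
        gcongr
        exact exp_div_two_le_cosh _
    _ = sinh (4 * w) := by rw [← sinh_two_mul]; ring_nf

lemma mul_exp_half_div_sinh_le {u : ℝ} (hu : 0 < u) :
    u * exp (u / 2) / sinh u ≤ 4 * exp (-(u / 4)) := by
  have hsinh := mul_exp_three_mul_le_sinh_four_mul (w := u / 4) (by positivity)
  rw [div_le_iff₀ (sinh_pos_iff.2 hu)]
  calc u * exp (u / 2) = 4 * exp (-(u / 4)) * (u / 4 * exp (3 * (u / 4))) := by
        rw [show u / 2 = -(u / 4) + 3 * (u / 4) by ring, exp_add]; ring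
    _ ≤ 4 * exp (-(u / 4)) * sinh u := by
        gcongr
        exact hsinh.trans_eq (by ring_nf)

lemma sqrt_le_rpow_quarter {X : ℝ} (hX : 0 ≤ X) (a : ℝ) (ha : 0 ≤ a) :
    √X ≤ (a + X ^ 2) ^ ((1 : ℝ) / 4) := by
  calc √X = (X ^ 2) ^ ((1 : ℝ) / 4) := by
        rw [← rpow_natCast, ← rpow_mul hX, sqrt_eq_rpow]; norm_num
    _ ≤ (a + X ^ 2) ^ ((1 : ℝ) / 4) := by gcongr; linarith

lemma integrand_le_exp {T X r a C₀ : ℝ} (hT : 0 < T) (hX : 0 < X) (hr : 0 < r) (ha₀ : 0 ≤ a)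
    (ha : a ≤ C₀ * exp (π * r / (2 * T))) :
    r / T * a / ((4 * r ^ 2 + X ^ 2) ^ ((1 : ℝ) / 4) * sinh (π * r / T)) ≤
      4 * C₀ / (π * √X) * exp (-(π / (4 * T)) * r) := by
  set u := π * r / T with hu
  have hu0 : 0 < u := by positivity
  have hsinh : 0 < sinh u := sinh_pos_iff.2 hu0
  have hroot := sqrt_le_rpow_quarter hX.le (4 * r ^ 2) (by positivity)
  have hkernel := mul_exp_half_div_sinh_le hu0
  have hC₀ : 0 ≤ C₀ := nonneg_of_mul_nonneg_left (ha₀.trans ha) (exp_pos _)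
  calc r / T * a / ((4 * r ^ 2 + X ^ 2) ^ ((1 : ℝ) / 4) * sinh u)
      ≤ u / π * (C₀ * exp (u / 2)) / (√X * sinh u) := by
        have ha' : a ≤ C₀ * exp (u / 2) := ha.trans_eq (by rw [hu]; ring_nf)
        have hrT : r / T = u / π := by rw [hu]; field_simp
        rw [hrT]
        gcongr
    _ = C₀ / (π * √X) * (u * exp (u / 2) / sinh u) := by ring
    _ ≤ C₀ / (π * √X) * (4 * exp (-(u / 4))) := by gcongr
    _ = 4 * C₀ / (π * √X) * exp (-(π / (4 * T)) * r) := by rw [hu]; ring_nf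

lemma integral_exp_neg_mul_Ioi_zero {b : ℝ} (hb : 0 < b) :
    ∫ r in Ioi (0 : ℝ), exp (-b * r) = 1 / b := by
  rw [integral_exp_mul_Ioi (neg_neg_of_pos hb)]
  simp

lemma div_sqrt_le_sqrt_mul {T X : ℝ} (hT : 0 < T) (hX : T / 8 ≤ X) : T / √X ≤ √8 * √T := by
  have hX0 : 0 < X := by linarith
  rw [div_le_iff₀ (sqrt_pos.2 hX0), ← sqrt_mul (by norm_num), ← sqrt_mul (by positivity)]
  exact le_sqrt_of_sq_le (by nlinarith)

lemma integral_le_of_le_exp {f : ℝ → ℝ} {C₀ T X : ℝ} (hT : 0 < T) (hX : 0 < X)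
    (hf₀ : ∀ r, 0 ≤ f r) (hf : ∀ r, 0 < r → f r ≤ C₀ * exp (π * r / (2 * T))) :
    ∫ r in Ioi (0 : ℝ), r / T * f r / ((4 * r ^ 2 + X ^ 2) ^ ((1 : ℝ) / 4) * sinh (π * r / T)) ≤
      16 * C₀ * T / (π ^ 2 * √X) := by
  have hb : 0 < π / (4 * T) := by positivity
  have hdominated : ∀ r ∈ Ioi (0 : ℝ), r / T * f r /
      ((4 * r ^ 2 + X ^ 2) ^ ((1 : ℝ) / 4) * sinh (π * r / T)) ≤
        4 * C₀ / (π * √X) * exp (-(π / (4 * T)) * r) :=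
    fun r hr ↦ integrand_le_exp hT hX hr (hf₀ r) (hf r hr)
  have hnonneg : ∀ r ∈ Ioi (0 : ℝ), 0 ≤ r / T * f r /
      ((4 * r ^ 2 + X ^ 2) ^ ((1 : ℝ) / 4) * sinh (π * r / T)) := fun r (hr : 0 < r) ↦ by
    have := sinh_pos_iff.2 (show 0 < π * r / T by positivity)
    have := hf₀ r
    positivity
  calc _ ≤ ∫ r in Ioi (0 : ℝ), 4 * C₀ / (π * √X) * exp (-(π / (4 * T)) * r) :=
        integral_mono_of_nonneg ((ae_restrict_iff' measurableSet_Ioi).2 (ae_of_all _ hnonneg))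
          ((integrableOn_exp_mul_Ioi (neg_neg_of_pos hb) 0).const_mul _)
          ((ae_restrict_iff' measurableSet_Ioi).2 (ae_of_all _ hdominated))
    _ = 16 * C₀ * T / (π ^ 2 * √X) := by
        rw [integral_const_mul, integral_exp_neg_mul_Ioi_zero hb]
        field_simp
        ring

theorem statement12 (C₀ : ℝ) (hC₀ : 0 < C₀) :
    ∃ C : ℝ, 0 < C ∧ ∀ h : ℂ → ℂ, Differentiable ℂ h →
      (∀ x y : ℝ, ‖h (x + y * Complex.I)‖ ≤ C₀ * Real.exp (Real.pi * |y| / 2)) →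
      ∀ T X : ℝ, 1 < T → T / 8 ≤ X →
      (∫ r in Set.Ioi (0 : ℝ),
        (r / T) * ‖h (Complex.I * r / T)‖ /
          ((4 * r ^ 2 + X ^ 2) ^ ((1 : ℝ) / 4) * Real.sinh (Real.pi * r / T))) ≤
        C * Real.sqrt T := by
  refine ⟨16 * √8 * C₀ / π ^ 2, by positivity, fun h _ hgrowth T X hT hX ↦ ?_⟩
  have hT₀ : 0 < T := by linarith
  have hImAxis : ∀ r : ℝ, 0 < r → ‖h (Complex.I * r / T)‖ ≤ C₀ * exp (π * r / (2 * T)) := by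
    intro r hr
    have := hgrowth 0 (r / T)
    rw [abs_of_pos (by positivity)] at this
    convert this using 3 <;> push_cast <;> ring
  calc _ ≤ 16 * C₀ * T / (π ^ 2 * √X) :=
        integral_le_of_le_exp hT₀ (by linarith) (fun _ ↦ norm_nonneg _) hImAxis
    _ = 16 * C₀ / π ^ 2 * (T / √X) := by ring
    _ ≤ 16 * C₀ / π ^ 2 * (√8 * √T) := by gcongr; exact div_sqrt_le_sqrt_mul hT₀ hX
    _ = 16 * √8 * C₀ / π ^ 2 * √T := by ring
end

section
/- Let h be an admissible weight. There exist constants C > 0 and c > 0, with C depending only on h and c absolute, such that for every odd integer T > 1 and every real X with 0 < X ≤ T, one has T² · Σ_{k=1}^∞ k²·|h(k)|·|J_{2kT}(X)| ≤ C·X·e^{−cT}. -/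
/-!
For `0 < X ≤ T` every order `m = 2kT` is at least `2X`, and there the power series gives
`|J_m(X)| ≤ (X/2)^m/m! · e^{X²/(4(m+1))} ≤ 2X e^{-m/4}` (using `m^m ≤ m! e^m`).  The weights
`k² |h(k)|` are bounded by the decay of `h` on the real axis, so the series is dominated by the
geometric series `2CX Σ_k e^{-kT/2} ≤ 4CX e^{-T/2}`, and `T² e^{-T/2} ≤ 32 e^{-T/4}`.
-/

open MeasureTheory

noncomputable section

/-- An admissible weight: an even entire function with rapid decay in horizontal
strips (up to `e^{π|y|/2}` growth vertically) vanishing to order at least 8 at 0. -/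
def IsAdmissible (h : ℂ → ℂ) : Prop :=
  Differentiable ℂ h ∧
  (∀ z : ℂ, h (-z) = h z) ∧
  (∀ A : ℝ, 0 ≤ A → ∃ C : ℝ, 0 < C ∧ ∀ x y : ℝ,
    ‖h (x + y * Complex.I)‖ ≤
      C * (1 + |x| + |y|) ^ (-A) * Real.exp (Real.pi * |y| / 2)) ∧
  (∀ j : ℕ, j ≤ 7 → iteratedDeriv j h 0 = 0)

/-- The weight `h_T(r) = (r/T) h(ir/T) / sinh(πr/T)`.  (At `r = 0` Lean's junk value
`0` agrees with the value obtained by continuity, since `h(0) = 0` for admissible `h`.) -/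
def weightT (h : ℂ → ℂ) (T : ℝ) (r : ℝ) : ℂ :=
  ((r : ℂ) / T) * h (Complex.I * r / T) / Complex.sinh (Real.pi * r / T)

/-- The Bessel function `J_ν(x)` of complex order `ν` at real argument `x > 0`. -/
def besselJC (ν : ℂ) (x : ℝ) : ℂ :=
  ∑' n : ℕ, (-1 : ℂ) ^ n * Complex.exp ((ν + 2 * (n : ℂ)) * (Real.log (x / 2) : ℂ)) /
    ((n.factorial : ℂ) * Complex.Gamma (ν + (n : ℂ) + 1))

/-- The classical Bessel function of nonnegative integer order. -/
def besselJ (k : ℕ) (x : ℝ) : ℝ :=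
  ∑' n : ℕ, (-1 : ℝ) ^ n * (x / 2) ^ (k + 2 * n) / ((n.factorial : ℝ) * ((n + k).factorial : ℝ))

open Nat in
lemma abs_besselJ_le (m : ℕ) {x : ℝ} (hx : 0 ≤ x) :
    |besselJ m x| ≤ (x / 2) ^ m / m ! * Real.exp (x ^ 2 / (4 * (m + 1))) := by
  have hterm : ∀ n : ℕ,
      ‖(-1 : ℝ) ^ n * (x / 2) ^ (m + 2 * n) / ((n ! : ℝ) * ((n + m)! : ℝ))‖ ≤
        (x / 2) ^ m / m ! * ((x ^ 2 / (4 * (m + 1))) ^ n / n !) := by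
    intro n
    have hfac : (m ! : ℝ) * (m + 1) ^ n ≤ (n + m)! := by
      rw [add_comm n m]; exact_mod_cast factorial_mul_pow_le_factorial
    calc ‖(-1 : ℝ) ^ n * (x / 2) ^ (m + 2 * n) / ((n ! : ℝ) * ((n + m)! : ℝ))‖
        = (x / 2) ^ m * (x ^ 2 / 4) ^ n / (n ! * (n + m)!) := by
          rw [norm_div, norm_mul, norm_pow, norm_neg, norm_one, one_pow, one_mul, pow_add,
            pow_mul, Real.norm_of_nonneg (by positivity), Real.norm_of_nonneg (by positivity)]
          ring
      _ ≤ (x / 2) ^ m * (x ^ 2 / 4) ^ n / (n ! * (m ! * (m + 1) ^ n)) := by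
          gcongr
      _ = (x / 2) ^ m / m ! * ((x ^ 2 / (4 * (m + 1))) ^ n / n !) := by
          simp only [div_pow, mul_pow]; field_simp
  have hexp : HasSum (fun n : ℕ => (x ^ 2 / (4 * (m + 1))) ^ n / n !)
      (Real.exp (x ^ 2 / (4 * (m + 1)))) := by
    rw [Real.exp_eq_exp_ℝ]; exact NormedSpace.expSeries_div_hasSum_exp _
  exact tsum_of_norm_bounded (hexp.mul_left _) hterm

lemma exp_twentyone_div_sixteen_le_four : Real.exp (21 / 16) ≤ 4 := by
  have h4 : Real.log 4 = 2 * Real.log 2 := by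
    rw [show (4 : ℝ) = 2 ^ 2 by norm_num, Real.log_pow]; norm_num
  rw [← Real.le_log_iff_exp_le (by norm_num), h4]
  linarith [Real.log_two_gt_d9]

open Nat in
lemma abs_besselJ_le_mul_exp_neg {m : ℕ} {x : ℝ} (hx : 0 < x) (hxm : x ≤ m / 2) :
    |besselJ m x| ≤ 2 * x * Real.exp (-(m / 4)) := by
  have hm : (0 : ℝ) < m := by linarith
  have hm1 : (1 : ℝ) ≤ m := Nat.one_le_cast.2 (Nat.cast_pos.1 hm)
  have hpow : (x / 2) ^ m ≤ 2 * x / m * (m / 4) ^ m := by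
    have hratio : (x / 2) ^ m = (2 * x / m) ^ m * (m / 4) ^ m := by
      rw [← mul_pow]; congr 1; field_simp; ring
    rw [hratio]
    gcongr
    exact pow_le_of_le_one (by positivity) ((div_le_one hm).2 (by linarith))
      (Nat.cast_pos.1 hm).ne'
  have hstirling : (m / 4 : ℝ) ^ m / m ! ≤ Real.exp m / 4 ^ m := by
    rw [div_pow, div_right_comm]
    gcongr
    exact Real.pow_div_factorial_le_exp _ hm.le m
  have hgauss : x ^ 2 / (4 * (m + 1)) ≤ m / 16 := by
    rw [div_le_div_iff₀ (by positivity) (by norm_num)]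
    nlinarith
  -- `21 / 16 = 1 + 1 / 16 + 1 / 4`: `e^m` from `hstirling`, `e^{m/16}` from `hgauss`
  have hexp : Real.exp m * Real.exp (m / 16) = Real.exp (-(m / 4)) * Real.exp (21 / 16) ^ m := by
    rw [← Real.exp_nat_mul, ← Real.exp_add, ← Real.exp_add]; ring_nf
  have hfour : Real.exp (21 / 16) ^ m / 4 ^ m ≤ 1 := by
    rw [div_le_one (by positivity)]
    exact pow_le_pow_left₀ (Real.exp_pos _).le exp_twentyone_div_sixteen_le_four m
  calc |besselJ m x| ≤ (x / 2) ^ m / m ! * Real.exp (x ^ 2 / (4 * (m + 1))) :=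
        abs_besselJ_le m hx.le
    _ ≤ 2 * x / m * ((m / 4) ^ m / m !) * Real.exp (m / 16) := by
        rw [← mul_div_assoc]; gcongr
    _ ≤ 2 * x * (Real.exp m / 4 ^ m) * Real.exp (m / 16) := by
        gcongr
        exact div_le_self (by positivity) hm1
    _ = 2 * x * Real.exp (-(m / 4)) * (Real.exp (21 / 16) ^ m / 4 ^ m) := by
        rw [mul_assoc, div_mul_eq_mul_div, hexp]; ring
    _ ≤ 2 * x * Real.exp (-(m / 4)) := mul_le_of_le_one_right (by positivity) hfour

lemma tsum_le_of_le_geometric {f : ℕ → ℝ} {B q : ℝ} (hf0 : ∀ k, 0 ≤ f k)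
    (hf : ∀ k, f k ≤ B * q ^ (k + 1)) (hq0 : 0 ≤ q) (hq1 : q < 1) :
    ∑' k, f k ≤ B * q / (1 - q) := by
  have hgeom : HasSum (fun k : ℕ => B * q ^ (k + 1)) (B * q / (1 - q)) := by
    simpa only [pow_succ', ← mul_assoc, div_eq_mul_inv] using
      (hasSum_geometric_of_lt_one hq0 hq1).mul_left (B * q)
  exact hasSum_le hf (hgeom.summable.of_nonneg_of_le hf0 hf).hasSum hgeom

lemma sq_mul_exp_neg_half_le {x : ℝ} (hx : 0 ≤ x) :
    x ^ 2 * Real.exp (-(x / 2)) ≤ 32 * Real.exp (-(x / 4)) := by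
  have hsq : x ^ 2 ≤ 32 * Real.exp (x / 4) := by
    have := Real.pow_div_factorial_le_exp (x / 4) (by positivity) 2
    norm_num [Nat.factorial] at this
    linarith
  calc x ^ 2 * Real.exp (-(x / 2)) ≤ 32 * Real.exp (x / 4) * Real.exp (-(x / 2)) := by gcongr
    _ = 32 * Real.exp (-(x / 4)) := by rw [mul_assoc, ← Real.exp_add]; ring_nf

lemma IsAdmissible.exists_sq_mul_norm_le {h : ℂ → ℂ} (hh : IsAdmissible h) :
    ∃ C, 0 < C ∧ ∀ r : ℝ, r ^ 2 * ‖h r‖ ≤ C := by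
  obtain ⟨C, hC, hdecay⟩ := hh.2.2.1 2 (by norm_num)
  refine ⟨C, hC, fun r => ?_⟩
  have hr : ‖h r‖ ≤ C / (1 + |r|) ^ 2 := by
    have := hdecay r 0
    rw [Complex.ofReal_zero, zero_mul, add_zero, abs_zero, add_zero, mul_zero, zero_div,
      Real.exp_zero, mul_one, Real.rpow_neg (by positivity), Real.rpow_two] at this
    exact this
  calc r ^ 2 * ‖h r‖ = |r| ^ 2 * ‖h r‖ := by rw [sq_abs]
    _ ≤ (1 + |r|) ^ 2 * (C / (1 + |r|) ^ 2) := by gcongr; linarith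
    _ = C := by field_simp

lemma sq_mul_norm_mul_abs_besselJ_le {h : ℂ → ℂ} {C : ℝ} (hsq : ∀ r : ℝ, r ^ 2 * ‖h r‖ ≤ C)
    {T : ℕ} {X : ℝ} (hX : 0 < X) (hXT : X ≤ T) (k : ℕ) :
    ((k : ℝ) + 1) ^ 2 * ‖h (((k : ℝ) + 1 : ℝ))‖ * |besselJ (2 * (k + 1) * T) X| ≤
      2 * C * X * Real.exp (-(T / 2)) ^ (k + 1) := by
  have hC : 0 ≤ C := by simpa using hsq 0
  have hk : (0 : ℝ) ≤ k := k.cast_nonneg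
  have hJ := abs_besselJ_le_mul_exp_neg (m := 2 * (k + 1) * T) hX (by push_cast; nlinarith)
  push_cast at hJ
  rw [← Real.exp_nat_mul]
  calc ((k : ℝ) + 1) ^ 2 * ‖h (((k : ℝ) + 1 : ℝ))‖ * |besselJ (2 * (k + 1) * T) X|
      ≤ C * (2 * X * Real.exp (-(2 * ((k : ℝ) + 1) * T / 4))) := by
        gcongr
        exact hsq _
    _ = 2 * C * X * Real.exp (((k + 1 : ℕ) : ℝ) * -(T / 2)) := by push_cast; ring_nf

lemma exp_neg_half_le_half {x : ℝ} (hx : 2 ≤ x) : Real.exp (-(x / 2)) ≤ 1 / 2 := by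
  have := Real.add_one_le_exp 1
  calc Real.exp (-(x / 2)) ≤ Real.exp (-1) := Real.exp_le_exp.2 (by linarith)
    _ ≤ 1 / 2 := by rw [Real.exp_neg]; exact inv_le_of_inv_le₀ (by norm_num) (by linarith)

theorem statement14 :
    ∃ c : ℝ, 0 < c ∧ ∀ h : ℂ → ℂ, IsAdmissible h →
      ∃ C : ℝ, 0 < C ∧ ∀ T : ℕ, Odd T → 1 < T → ∀ X : ℝ, 0 < X → X ≤ (T : ℝ) →
      (T : ℝ) ^ 2 * ∑' k : ℕ, ((k : ℝ) + 1) ^ 2 * ‖h (((k : ℝ) + 1 : ℝ))‖ *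
        |besselJ (2 * (k + 1) * T) X| ≤ C * X * Real.exp (-c * T) := by
  refine ⟨1 / 4, by norm_num, fun h hh => ?_⟩
  obtain ⟨C, hC, hsq⟩ := hh.exists_sq_mul_norm_le
  refine ⟨128 * C, by positivity, fun T _ hT X hX hXT => ?_⟩
  have hT2 : (2 : ℝ) ≤ T := by exact_mod_cast hT
  set q := Real.exp (-(T / 2))
  have hq0 : 0 ≤ q := (Real.exp_pos _).le
  have hq_half : q ≤ 1 / 2 := exp_neg_half_le_half hT2
  calc (T : ℝ) ^ 2 * ∑' k : ℕ, ((k : ℝ) + 1) ^ 2 * ‖h (((k : ℝ) + 1 : ℝ))‖ *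
        |besselJ (2 * (k + 1) * T) X|
      ≤ T ^ 2 * (2 * C * X * q / (1 - q)) := by
        gcongr
        exact tsum_le_of_le_geometric (fun k => by positivity)
          (sq_mul_norm_mul_abs_besselJ_le hsq hX hXT) hq0 (by linarith)
    _ ≤ T ^ 2 * (2 * C * X * (2 * q)) := by
        rw [mul_div_assoc]
        gcongr
        rw [div_le_iff₀ (by linarith)]
        nlinarith
    _ = 4 * C * X * (T ^ 2 * Real.exp (-(T / 2))) := by ring
    _ ≤ 4 * C * X * (32 * Real.exp (-(T / 4))) :=
        mul_le_mul_of_nonneg_left (sq_mul_exp_neg_half_le (by linarith)) (by positivity)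
    _ = 128 * C * X * Real.exp (-(1 / 4) * T) := by ring_nf

end
end

section
/- Let h be an admissible weight which is not identically zero and which additionally satisfies h(iy) ∈ [0, ∞) for all real y. Then there exist constants c > 0 and C > 0, depending only on h, such that for every odd integer T > 1, c·T² ≤ ∫_{-∞}^{∞} r·h_T(r)·tanh(πr) dr ≤ C·T². -/
open MeasureTheory

noncomputable section

/-! Substituting `r = T s` turns the integral into `T² ∫ P(s) tanh(πTs) ds` with
`P(s) = s² h(is) / sinh(πs)` (`weightProfile`). As `h(is) ≥ 0`, both `P(s)` and `tanh(πTs)` have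
the sign of `s`, so the integrand is nonnegative and increases with `T`. It is therefore squeezed
between its value at `T = 1`, which has positive integral because `h` cannot vanish on the whole
imaginary axis (identity theorem), and `|P|`, which is integrable because
`|h(is)| ≲ (1+|s|)⁻³ e^{π|s|/2}` while `sinh(π|s|) ≳ |s| e^{π|s|/2}`. -/

open Real Topology

theorem Real.tanh_le_tanh {x y : ℝ} (hxy : x ≤ y) : tanh x ≤ tanh y := by
  have mem : ∀ z, tanh z ∈ Set.Ioo (-1 : ℝ) 1 := fun z => ⟨neg_one_lt_tanh z, tanh_lt_one z⟩
  rwa [← artanh_le_artanh_iff (mem x) (mem y), artanh_tanh, artanh_tanh]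

theorem Real.continuous_tanh : Continuous tanh := by
  simp only [funext tanh_eq_sinh_div_cosh]
  exact continuous_sinh.div continuous_cosh fun x => (cosh_pos x).ne'

theorem Real.tanh_ne_zero {x : ℝ} (hx : x ≠ 0) : tanh x ≠ 0 := by
  rw [tanh_eq_sinh_div_cosh]
  exact div_ne_zero (sinh_ne_zero.2 hx) (cosh_pos x).ne'

theorem Real.mul_exp_half_le_two_mul_sinh {x : ℝ} (hx : 0 ≤ x) :
    x * exp (x / 2) ≤ 2 * sinh x := by
  have hsinh : x / 2 ≤ sinh (x / 2) := self_le_sinh_iff.2 (by positivity)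
  have hcosh : exp (x / 2) ≤ 2 * cosh (x / 2) := by
    rw [cosh_eq]; linarith [exp_pos (-(x / 2))]
  calc x * exp (x / 2) = 2 * (x / 2) * exp (x / 2) := by ring
    _ ≤ 2 * sinh (x / 2) * (2 * cosh (x / 2)) := by gcongr
    _ = 2 * sinh x := by rw [← mul_div_cancel₀ x two_ne_zero, sinh_two_mul]; ring_nf

theorem Complex.eq_zero_of_forall_I_mul_eq_zero {f : ℂ → ℂ} (hf : Differentiable ℂ f)
    (hzero : ∀ y : ℝ, f (I * y) = 0) : f = 0 := by
  have hmaps : Filter.Tendsto (fun y : ℝ => I * y) (𝓝[≠] 0) (𝓝[≠] 0) := by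
    refine tendsto_nhdsWithin_of_tendsto_nhds_of_eventually_within _ ?_ ?_
    · exact ((continuous_const.mul continuous_ofReal).tendsto' (0 : ℝ) 0 (by simp)).mono_left
        nhdsWithin_le_nhds
    · filter_upwards [self_mem_nhdsWithin] with y hy
      simpa using hy
  have hfreq : ∃ᶠ z in 𝓝[≠] (0 : ℂ), f z = 0 :=
    hmaps.frequently (Filter.Frequently.of_forall hzero)
  funext z
  exact (analyticOnNhd_univ_iff_differentiable.2 hf).eqOn_zero_of_preconnected_of_frequently_eq_zero
    isPreconnected_univ (Set.mem_univ 0) hfreq (Set.mem_univ z)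

namespace IsAdmissible

variable {h : ℂ → ℂ}

theorem apply_zero (hh : IsAdmissible h) : h 0 = 0 := by
  simpa using hh.2.2.2 0 (by norm_num)

theorem continuous_imaginaryAxis (hh : IsAdmissible h) :
    Continuous fun y : ℝ => h (Complex.I * y) := by
  have := hh.1.continuous
  fun_prop

theorem exists_norm_imaginaryAxis_le (hh : IsAdmissible h) :
    ∃ C > 0, ∀ y : ℝ,
      ‖h (Complex.I * y)‖ ≤ C * ((1 + |y|) ^ 3)⁻¹ * exp (π * |y| / 2) := by
  obtain ⟨C, hC, hbd⟩ := hh.2.2.1 3 (by norm_num)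
  refine ⟨C, hC, fun y => ?_⟩
  have hy := hbd 0 y
  rwa [Complex.ofReal_zero, zero_add, abs_zero, add_zero, mul_comm,
    rpow_neg (by positivity), rpow_ofNat] at hy

end IsAdmissible

def weightProfile (h : ℂ → ℂ) (s : ℝ) : ℝ :=
  s ^ 2 * (h (Complex.I * s)).re / sinh (π * s)

theorem mul_re_weightT (h : ℂ → ℂ) {T : ℝ} (hT : T ≠ 0) (r : ℝ) :
    r * (weightT h T r).re = T * weightProfile h (r / T) := by
  have hsinh : Complex.sinh (π * r / T) = (sinh (π * (r / T)) : ℂ) := by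
    rw [Complex.ofReal_sinh]; push_cast; ring_nf
  rw [weightT, hsinh, show (r : ℂ) / T * h (Complex.I * r / T) =
      ((r / T : ℝ) : ℂ) * h (Complex.I * (r / T : ℝ)) by push_cast; ring_nf,
    Complex.div_ofReal_re, Complex.re_ofReal_mul, weightProfile]
  field_simp

section Profile

variable {h : ℂ → ℂ}

theorem abs_weightProfile_le (hh : IsAdmissible h) :
    ∃ M, ∀ s, |weightProfile h s| ≤ M * (1 + s ^ 2)⁻¹ := by
  obtain ⟨C, hC, hbd⟩ := hh.exists_norm_imaginaryAxis_le
  refine ⟨2 * C / π, fun s => ?_⟩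
  rcases eq_or_ne s 0 with rfl | hs
  · rw [weightProfile, zero_pow two_ne_zero, zero_mul, zero_div, abs_zero]
    positivity
  set u := |s|
  have hu : 0 < u := abs_pos.2 hs
  have hS : 0 < sinh (π * u) := sinh_pos_iff.2 (by positivity)
  have hkey := mul_exp_half_le_two_mul_sinh (by positivity : 0 ≤ π * u)
  have hre : |(h (Complex.I * s)).re| ≤ C * ((1 + u) ^ 3)⁻¹ * exp (π * u / 2) :=
    (Complex.abs_re_le_norm _).trans (hbd s)
  have habs : |weightProfile h s| = u ^ 2 * |(h (Complex.I * s)).re| / sinh (π * u) := by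
    rw [weightProfile, abs_div, abs_mul, abs_pow, abs_sinh, abs_mul, abs_of_pos pi_pos]
  have hfrac : u / (1 + u) ^ 3 ≤ 1 / (1 + u ^ 2) := by
    rw [div_le_div_iff₀ (by positivity) (by positivity)]
    nlinarith [sq_nonneg u]
  rw [habs, ← sq_abs s, div_le_iff₀ hS]
  calc u ^ 2 * |(h (Complex.I * s)).re|
      ≤ u ^ 2 * (C * ((1 + u) ^ 3)⁻¹ * exp (π * u / 2)) := by gcongr
    _ = C / π * (π * u * exp (π * u / 2)) * (u / (1 + u) ^ 3) := by field_simp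
    _ ≤ C / π * (2 * sinh (π * u)) * (1 / (1 + u ^ 2)) := by gcongr
    _ = 2 * C / π * (1 + u ^ 2)⁻¹ * sinh (π * u) := by ring

theorem integrable_weightProfile (hh : IsAdmissible h) : Integrable (weightProfile h) := by
  obtain ⟨M, hM⟩ := abs_weightProfile_le hh
  have hre : Measurable fun y : ℝ => (h (Complex.I * y)).re :=
    (Complex.continuous_re.comp hh.continuous_imaginaryAxis).measurable
  have hmeas : Measurable (weightProfile h) := by unfold weightProfile; fun_prop
  exact (integrable_inv_one_add_sq.const_mul M).mono' hmeas.aestronglyMeasurable (ae_of_all _ hM)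

theorem integrable_weightProfile_mul_tanh (hh : IsAdmissible h) {g : ℝ → ℝ}
    (hg : Measurable g) : Integrable fun s => weightProfile h s * tanh (g s) :=
  (integrable_weightProfile hh).mul_bdd (continuous_tanh.measurable.comp hg).aestronglyMeasurable
    (ae_of_all _ fun s => (abs_tanh_lt_one (g s)).le)

theorem weightProfile_mul_tanh_le_abs (s x : ℝ) :
    weightProfile h s * tanh x ≤ |weightProfile h s| :=
  (le_abs_self _).trans <| (abs_mul _ _).trans_le <|
    mul_le_of_le_one_right (abs_nonneg _) (abs_tanh_lt_one x).le

variable (hre : ∀ y : ℝ, 0 ≤ (h (Complex.I * y)).re)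
include hre

theorem weightProfile_nonneg {s : ℝ} (hs : 0 ≤ s) : 0 ≤ weightProfile h s :=
  div_nonneg (mul_nonneg (sq_nonneg s) (hre s)) (sinh_nonneg_iff.2 (by positivity))

theorem weightProfile_nonpos {s : ℝ} (hs : s ≤ 0) : weightProfile h s ≤ 0 :=
  div_nonpos_of_nonneg_of_nonpos (mul_nonneg (sq_nonneg s) (hre s))
    (sinh_nonpos_iff.2 (mul_nonpos_of_nonneg_of_nonpos pi_pos.le hs))

theorem weightProfile_mul_tanh_nonneg (s : ℝ) : 0 ≤ weightProfile h s * tanh (π * s) := by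
  rcases le_total 0 s with hs | hs
  · exact mul_nonneg (weightProfile_nonneg hre hs) (tanh_zero ▸ tanh_le_tanh (by positivity))
  · exact mul_nonneg_of_nonpos_of_nonpos (weightProfile_nonpos hre hs)
      (tanh_zero ▸ tanh_le_tanh (mul_nonpos_of_nonneg_of_nonpos pi_pos.le hs))

theorem weightProfile_mul_tanh_le {t : ℝ} (ht : 1 ≤ t) (s : ℝ) :
    weightProfile h s * tanh (π * s) ≤ weightProfile h s * tanh (π * (t * s)) := by
  rcases le_total 0 s with hs | hs
  · exact mul_le_mul_of_nonneg_left (tanh_le_tanh (by gcongr; nlinarith))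
      (weightProfile_nonneg hre hs)
  · exact mul_le_mul_of_nonpos_left (tanh_le_tanh (by gcongr; nlinarith))
      (weightProfile_nonpos hre hs)

end Profile

theorem integral_mul_re_weightT (h : ℂ → ℂ) {T : ℝ} (hT : 0 < T) :
    ∫ r, r * (weightT h T r).re * tanh (π * r) =
      T ^ 2 * ∫ s, weightProfile h s * tanh (π * (T * s)) := by
  have hpt : ∀ r, r * (weightT h T r).re * tanh (π * r) =
      T * (weightProfile h (r / T) * tanh (π * (T * (r / T)))) := by
    intro r
    rw [mul_re_weightT h hT.ne', mul_div_cancel₀ r hT.ne']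
    ring
  simp_rw [hpt]
  rw [integral_const_mul,
    Measure.integral_comp_div (fun s => weightProfile h s * tanh (π * (T * s))),
    abs_of_pos hT, smul_eq_mul]
  ring

theorem integral_weightProfile_mul_tanh_pos {h : ℂ → ℂ} (hh : IsAdmissible h)
    (hne : ∃ z : ℂ, h z ≠ 0)
    (hpos : ∀ y : ℝ, (h (Complex.I * y)).im = 0 ∧ 0 ≤ (h (Complex.I * y)).re) :
    0 < ∫ s, weightProfile h s * tanh (π * s) := by
  have hre : ∀ y : ℝ, 0 ≤ (h (Complex.I * y)).re := fun y => (hpos y).2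
  set U := {s : ℝ | h (Complex.I * s) ≠ 0}
  have hU_open : IsOpen U := isOpen_ne_fun hh.continuous_imaginaryAxis continuous_const
  have hU_ne : U.Nonempty := by
    by_contra hU
    obtain ⟨z, hz⟩ := hne
    refine hz (congrFun (Complex.eq_zero_of_forall_I_mul_eq_zero hh.1 fun y => ?_) z)
    by_contra hy
    exact hU ⟨y, hy⟩
  have hU_support : U ⊆ Function.support fun s => weightProfile h s * tanh (π * s) := by
    intro s hs
    have hs0 : s ≠ 0 := by
      rintro rfl
      exact hs (by simpa using hh.apply_zero)
    have hre_ne : (h (Complex.I * s)).re ≠ 0 := fun h0 => hs (Complex.ext h0 (hpos s).1)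
    have hπs : π * s ≠ 0 := mul_ne_zero pi_ne_zero hs0
    exact mul_ne_zero (div_ne_zero (mul_ne_zero (pow_ne_zero 2 hs0) hre_ne) (sinh_ne_zero.2 hπs))
      (tanh_ne_zero hπs)
  rw [integral_pos_iff_support_of_nonneg (weightProfile_mul_tanh_nonneg hre)
    (integrable_weightProfile_mul_tanh hh (by fun_prop))]
  exact (hU_open.measure_pos volume hU_ne).trans_le (measure_mono hU_support)

theorem statement17 (h : ℂ → ℂ) (hh : IsAdmissible h) (hne : ∃ z : ℂ, h z ≠ 0)
    (hpos : ∀ y : ℝ, (h (Complex.I * y)).im = 0 ∧ 0 ≤ (h (Complex.I * y)).re) :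
    ∃ c C : ℝ, 0 < c ∧ 0 < C ∧ ∀ T : ℤ, Odd T → 1 < T →
      c * (T : ℝ) ^ 2 ≤ (∫ r : ℝ, r * (weightT h T r).re * Real.tanh (Real.pi * r)) ∧
      (∫ r : ℝ, r * (weightT h T r).re * Real.tanh (Real.pi * r)) ≤ C * (T : ℝ) ^ 2 := by
  have hre : ∀ y : ℝ, 0 ≤ (h (Complex.I * y)).re := fun y => (hpos y).2
  have hc := integral_weightProfile_mul_tanh_pos hh hne hpos
  have hint : ∀ t : ℝ, Integrable fun s => weightProfile h s * tanh (π * (t * s)) :=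
    fun t => integrable_weightProfile_mul_tanh hh (by fun_prop)
  have habs : ∀ t : ℝ,
      ∫ s, weightProfile h s * tanh (π * (t * s)) ≤ ∫ s, |weightProfile h s| :=
    fun t => integral_mono (hint t) (integrable_weightProfile hh).abs
      fun s => weightProfile_mul_tanh_le_abs s _
  refine ⟨_, _, hc, hc.trans_le (by simpa using habs 1), fun T _ hT => ?_⟩
  have hT0 : (0 : ℝ) < T := by exact_mod_cast zero_lt_one.trans hT
  rw [integral_mul_re_weightT h hT0, mul_comm _ ((T : ℝ) ^ 2), mul_comm _ ((T : ℝ) ^ 2)]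
  refine ⟨mul_le_mul_of_nonneg_left ?_ (sq_nonneg _),
    mul_le_mul_of_nonneg_left (habs T) (sq_nonneg _)⟩
  exact integral_mono (by simpa using hint 1) (hint T)
    (weightProfile_mul_tanh_le hre (by exact_mod_cast hT.le))

end
end
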